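/- For k ∈ ℤ define u_k = (2+√3)^k − (2−√3)^k. Let Δ^L > 0, Δ^R > 0, set a = −(1/2)·Δ^L/(Δ^R+Δ^L) and b = −(1/2)·Δ^R/(Δ^R+Δ^L), and let (f_k)_{k∈ℤ} be a real sequence. Let A_n = (−1)^{n-1}·u_1·a/(u_n + u_{n-1}·a). Define C_1 = (3/2)·(1/(Δ^R+Δ^L))·[(Δ^L/Δ^R)·f_1 + (Δ^R/Δ^L − Δ^L/Δ^R)·f_0 − (Δ^R/Δ^L)·f_{-1}], C_2 = [4·C_1 + 3·a·(f_2 − f_0)/Δ^R]/(4 + a), and for n ≥ 2: C_{n+1} = [4·C_n + (A_n/A_{n-1})·C_{n-1} + 3·A_n·(f_{n+1} − f_{n-1})/Δ^R]/(4 + A_n/A_{n-1}). Then all denominators in this recursion are nonzero, and for every n ≥ 1: C_n = Σ_{k=-1}^{n} ω_{k,n}·f_k, where ω_{n,n} = 3·(−1)^n·(a/Δ^R)·u_1/(u_n + u_{n-1}·a); ω_{k,n} = 3·(−1)^k·(a/Δ^R)·(u_{n-k+1} − u_{n-k-1})/(u_n + u_{n-1}·a) for 1 ≤ k ≤ n−1;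 ω_{0,n} = 3·[(a/Δ^R)·(u_n − u_{n-1}) − (b/Δ^L)·u_n]/(u_n + u_{n-1}·a); and ω_{-1,n} = 3·(b/Δ^L)·u_n/(u_n + u_{n-1}·a). -/

import Mathlib

/-- The sequence `u_k = (2+√3)^k − (2−√3)^k`, indexed by the integers. -/
noncomputable def uSeq (k : ℤ) : ℝ :=
  (2 + Real.sqrt 3) ^ k - (2 - Real.sqrt 3) ^ k

/-!
Write `D_n = u_n + u_{n-1} a`. Since `D` satisfies the recursion `D_{n+1} = 4 D_n - D_{n-1}` of
`u`, the prescribed `A_n` satisfy `A_n / A_{n-1} = -D_{n-1} / D_n` and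
`4 + A_n / A_{n-1} = D_{n+1} / D_n`. Multiplying the recursion for `C` by `D_{n+1}` therefore
linearises it: `E_n = C_n D_n` satisfies
`E_{n+1} = 4 E_n - E_{n-1} + 3 (-1)^{n-1} u_1 (a / Δ^R) (f_{n+1} - f_{n-1})`.
The claimed numerators `D_n ω_{k,n}` are combinations of `u_{n-k±1}`, so they satisfy the same
inhomogeneous recursion, the inhomogeneity coming from the two weights next to the top index;
they also agree with `E_1` and `E_2`. All denominators are nonzero because `-1/2 < a < 0` and
`u` is nonnegative and increasing on `ℕ`, so `D_n ≥ u_n - u_{n-1} > 0`.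
-/

open Finset

theorem zpow_add_one_eq_of_sq_eq {K : Type*} [Field K] {x p q : K} (hx : x ≠ 0)
    (h : x ^ 2 = p * x + q) (k : ℤ) : x ^ (k + 1) = p * x ^ k + q * x ^ (k - 1) := by
  have hk : x ^ (k + 1) = x ^ (k - 1) * x ^ 2 := by
    rw [← zpow_natCast, ← zpow_add₀ hx]; ring_nf
  rw [hk, h, ← sub_add_cancel k 1, zpow_add_one₀ hx, add_sub_cancel_right]
  ring

theorem uSeq_add_one (k : ℤ) : uSeq (k + 1) = 4 * uSeq k - uSeq (k - 1) := by
  have h3 : Real.sqrt 3 ^ 2 = 3 := Real.sq_sqrt (by norm_num)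
  have hlt : Real.sqrt 3 < 2 := by nlinarith [Real.sqrt_nonneg 3]
  unfold uSeq
  rw [zpow_add_one_eq_of_sq_eq (p := 4) (q := -1) (by positivity) (by linear_combination h3),
    zpow_add_one_eq_of_sq_eq (p := 4) (q := -1) (by linarith) (by linear_combination h3)]
  ring

@[simp] theorem uSeq_zero : uSeq 0 = 0 := by simp [uSeq]

theorem uSeq_one : uSeq 1 = 2 * Real.sqrt 3 := by simp only [uSeq, zpow_one]; ring

theorem uSeq_one_pos : 0 < uSeq 1 := by rw [uSeq_one]; positivity

theorem uSeq_two : uSeq 2 = 4 * uSeq 1 := by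
  simpa using uSeq_add_one 1

theorem uSeq_three : uSeq 3 = 15 * uSeq 1 := by
  have h := uSeq_add_one 2
  norm_num [uSeq_two] at h
  linear_combination h

theorem uSeq_natCast_nonneg_and_lt_succ (n : ℕ) : 0 ≤ uSeq n ∧ uSeq n < uSeq (n + 1) := by
  induction n with
  | zero => simpa using uSeq_one_pos
  | succ m ih =>
    have hrec := uSeq_add_one ((m : ℤ) + 1)
    rw [add_sub_cancel_right] at hrec
    push_cast
    constructor <;> linarith [ih.1, ih.2]

noncomputable def weightDenom (a : ℝ) (n : ℤ) : ℝ := uSeq n + uSeq (n - 1) * a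

theorem weightDenom_add_one (a : ℝ) (n : ℤ) :
    weightDenom a (n + 1) = 4 * weightDenom a n - weightDenom a (n - 1) := by
  have h := uSeq_add_one (n - 1)
  rw [sub_add_cancel] at h
  simp only [weightDenom, add_sub_cancel_right, uSeq_add_one n, h]
  ring

theorem weightDenom_pos {a : ℝ} (ha : -1 ≤ a) {n : ℕ} (hn : 1 ≤ n) : 0 < weightDenom a n := by
  obtain ⟨m, rfl⟩ := Nat.exists_eq_add_of_le' hn
  obtain ⟨hm, hlt⟩ := uSeq_natCast_nonneg_and_lt_succ m
  rw [weightDenom, Nat.cast_succ, add_sub_cancel_right]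
  nlinarith

noncomputable def interiorWeight (n k : ℤ) : ℝ := (-1) ^ k * (uSeq (n - k + 1) - uSeq (n - k - 1))

theorem interiorWeight_add_two (n k : ℤ) :
    interiorWeight (n + 2) k = 4 * interiorWeight (n + 1) k - interiorWeight n k := by
  have h₁ := uSeq_add_one (n - k + 2)
  have h₂ := uSeq_add_one (n - k)
  simp only [interiorWeight]
  ring_nf at h₁ h₂ ⊢
  linear_combination (-1 : ℝ) ^ k * (h₁ - h₂)

theorem interiorWeight_self_add (k j : ℤ) :
    interiorWeight (k + j) k = (-1) ^ k * (uSeq (j + 1) - uSeq (j - 1)) := by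
  simp only [interiorWeight, add_sub_cancel_left]

noncomputable def interiorSum (f : ℤ → ℝ) (n : ℤ) : ℝ :=
  ∑ k ∈ Icc 1 (n - 1), interiorWeight n k * f k

theorem interiorSum_one (f : ℤ → ℝ) : interiorSum f 1 = 0 := by
  simp [interiorSum]

theorem interiorSum_two (f : ℤ → ℝ) : interiorSum f 2 = -(4 * uSeq 1) * f 1 := by
  simp [interiorSum, interiorWeight, uSeq_two]

theorem interiorSum_add_two (f : ℤ → ℝ) {n : ℤ} (hn : 1 ≤ n) :
    interiorSum f (n + 2) = 4 * interiorSum f (n + 1) - interiorSum f n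
      + (-1) ^ (n + 1) * uSeq 1 * (4 * f (n + 1) + 2 * f n) := by
  have hinterior : ∑ k ∈ Icc 1 (n - 1), interiorWeight (n + 2) k * f k
      = 4 * ∑ k ∈ Icc 1 (n - 1), interiorWeight (n + 1) k * f k
        - ∑ k ∈ Icc 1 (n - 1), interiorWeight n k * f k := by
    rw [mul_sum, ← sum_sub_distrib]
    exact sum_congr rfl fun k _ => by rw [interiorWeight_add_two]; ring
  simp only [interiorSum, add_sub_cancel_right, show n + 2 - 1 = n + 1 by ring]
  rw [← insert_Icc_right_eq_Icc_add_one (by omega), sum_insert (by simp),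
    ← insert_Icc_sub_one_right_eq_Icc hn, sum_insert (by simp), sum_insert (by simp), hinterior,
    show n + 2 = (n + 1) + 1 by ring, interiorWeight_self_add, interiorWeight_self_add,
    show n + 1 + 1 = n + 2 by ring, interiorWeight_self_add]
  simp only [zpow_add_one₀ (by norm_num : (-1 : ℝ) ≠ 0)]
  norm_num [uSeq_two, uSeq_three]
  ring

noncomputable def weightNumer (α β : ℝ) (f : ℤ → ℝ) (n : ℤ) : ℝ :=
  3 * α * ((-1) ^ n * uSeq 1 * f n + interiorSum f n)
    + 3 * (α * (uSeq n - uSeq (n - 1)) - β * uSeq n) * f 0 + 3 * β * uSeq n * f (-1)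

theorem weightNumer_add_two (α β : ℝ) (f : ℤ → ℝ) {n : ℤ} (hn : 1 ≤ n) :
    weightNumer α β f (n + 2) = 4 * weightNumer α β f (n + 1) - weightNumer α β f n
      + 3 * α * (-1) ^ n * uSeq 1 * (f (n + 2) - f n) := by
  have h₁ := uSeq_add_one (n + 1)
  have h₂ := uSeq_add_one n
  simp only [weightNumer, interiorSum_add_two f hn, add_sub_cancel_right,
    show n + 2 - 1 = n + 1 by ring, show n + 1 + 1 = n + 2 by ring,
    zpow_add_one₀ (by norm_num : (-1 : ℝ) ≠ 0), zpow_add₀ (by norm_num : (-1 : ℝ) ≠ 0)] at h₁ ⊢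
  linear_combination 3 * ((α - β) * f 0 + β * f (-1)) * h₁ - 3 * α * f 0 * h₂

theorem weightNumer_one (α β : ℝ) (f : ℤ → ℝ) :
    weightNumer α β f 1 = 3 * uSeq 1 * (-α * f 1 + (α - β) * f 0 + β * f (-1)) := by
  simp only [weightNumer, interiorSum_one, zpow_one, sub_self, uSeq_zero]
  ring

theorem weightNumer_two (α β : ℝ) (f : ℤ → ℝ) :
    weightNumer α β f 2 = 4 * weightNumer α β f 1 + 3 * α * uSeq 1 * (f 2 - f 0) := by
  simp only [weightNumer, interiorSum_one, interiorSum_two, zpow_ofNat, sub_self,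
    uSeq_zero, uSeq_two, show (2 : ℤ) - 1 = 1 by norm_num]
  ring

theorem weightNumer_natCast_div (α β d : ℝ) (f : ℤ → ℝ) (n : ℕ) :
    weightNumer α β f n / d =
      3 * (-1 : ℝ) ^ n * α * uSeq 1 / d * f n
        + (∑ k ∈ Icc (1 : ℤ) (n - 1),
            3 * (-1 : ℝ) ^ k * α * (uSeq (n - k + 1) - uSeq (n - k - 1)) / d * f k)
        + 3 * (α * (uSeq n - uSeq (n - 1)) - β * uSeq n) / d * f 0
        + 3 * β * uSeq n / d * f (-1) := by
  have hsum : ∑ k ∈ Icc (1 : ℤ) (n - 1),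
      3 * (-1 : ℝ) ^ k * α * (uSeq (n - k + 1) - uSeq (n - k - 1)) / d * f k
        = 3 * α * interiorSum f n / d := by
    rw [interiorSum, mul_sum, sum_div]
    exact sum_congr rfl fun k _ => by rw [interiorWeight]; ring
  rw [hsum, weightNumer, zpow_natCast]
  ring

theorem eq_of_two_step_recurrence {α : Type*} {x y : ℕ → α} {m : ℕ} (step : ℕ → α → α → α)
    (hx : ∀ n, m ≤ n → x (n + 2) = step n (x n) (x (n + 1)))
    (hy : ∀ n, m ≤ n → y (n + 2) = step n (y n) (y (n + 1)))
    (h₀ : x m = y m) (h₁ : x (m + 1) = y (m + 1)) : ∀ n, m ≤ n → x n = y n := by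
  have hpair : ∀ n, m ≤ n → x n = y n ∧ x (n + 1) = y (n + 1) := by
    intro n hn
    induction n, hn using Nat.le_induction with
    | base => exact ⟨h₀, h₁⟩
    | succ n hmn ih => exact ⟨ih.2, by rw [hx n hmn, hy n hmn, ih.1, ih.2]⟩
  exact fun n hn => (hpair n hn).1

noncomputable def forwardCoeff (a : ℝ) (n : ℕ) : ℝ :=
  (-1) ^ (n - 1) * uSeq 1 * a / weightDenom a n

section forwardCoeff

variable {a : ℝ} (ha : a ≠ 0) (hD : ∀ n : ℕ, 1 ≤ n → weightDenom a n ≠ 0)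
include ha hD

theorem forwardCoeff_ne_zero {n : ℕ} (hn : 1 ≤ n) : forwardCoeff a n ≠ 0 :=
  div_ne_zero (mul_ne_zero (mul_ne_zero (by simp) uSeq_one_pos.ne') ha) (hD n hn)

theorem forwardCoeff_succ_div {n : ℕ} (hn : 1 ≤ n) :
    forwardCoeff a (n + 1) / forwardCoeff a n
      = -(weightDenom a n / weightDenom a (n + 1 : ℕ)) := by
  obtain ⟨m, rfl⟩ := Nat.exists_eq_add_of_le' hn
  have h₁ := hD (m + 1) (by omega)
  have h₂ := hD (m + 2) (by omega)
  have hu := uSeq_one_pos.ne'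
  simp only [forwardCoeff, Nat.add_sub_cancel, pow_succ]
  field_simp

theorem four_add_forwardCoeff_succ_div {n : ℕ} (hn : 1 ≤ n) :
    4 + forwardCoeff a (n + 1) / forwardCoeff a n
      = weightDenom a (n + 2 : ℕ) / weightDenom a (n + 1 : ℕ) := by
  have hrec := weightDenom_add_one a (n + 1)
  have h₁ := hD (n + 1) (by omega)
  rw [forwardCoeff_succ_div ha hD hn]
  push_cast at h₁ ⊢
  rw [show (n : ℤ) + 2 = n + 1 + 1 by ring, hrec, add_sub_cancel_right]
  field_simp
  ring

end forwardCoeff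

section coeff

variable {ΔL ΔR a b : ℝ} {f : ℤ → ℝ} {C : ℕ → ℝ}

theorem coeff_one_mul_weightDenom (hL : 0 < ΔL) (hR : 0 < ΔR)
    (ha : a = -(1/2) * ΔL / (ΔR + ΔL)) (hb : b = -(1/2) * ΔR / (ΔR + ΔL))
    (hC1 : C 1 = 3/2 * (1 / (ΔR + ΔL)) *
      ((ΔL / ΔR) * f 1 + (ΔR / ΔL - ΔL / ΔR) * f 0 - (ΔR / ΔL) * f (-1))) :
    C 1 * weightDenom a (1 : ℕ) = weightNumer (a / ΔR) (b / ΔL) f (1 : ℕ) := by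
  rw [Nat.cast_one, weightNumer_one, weightDenom, sub_self, uSeq_zero, hC1, ha, hb]
  field_simp
  ring

theorem coeff_two_mul_weightDenom (h4a : 4 + a ≠ 0)
    (hC2 : C 2 = (4 * C 1 + 3 * a * (f 2 - f 0) / ΔR) / (4 + a)) :
    C 2 * weightDenom a (2 : ℕ)
      = 4 * (C 1 * weightDenom a (1 : ℕ)) + 3 * (a / ΔR) * uSeq 1 * (f 2 - f 0) := by
  simp only [weightDenom, Nat.cast_ofNat, Nat.cast_one, sub_self, uSeq_zero,
    show (2 : ℤ) - 1 = 1 by norm_num, uSeq_two, hC2]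
  field_simp
  ring

theorem coeff_mul_weightDenom_add_two {A : ℕ → ℝ} (ha : a ≠ 0)
    (hD : ∀ n : ℕ, 1 ≤ n → weightDenom a n ≠ 0)
    (hA : ∀ n : ℕ, 1 ≤ n → A n = forwardCoeff a n)
    (hCrec : ∀ n : ℕ, 2 ≤ n →
      C (n + 1) = (4 * C n + (A n / A (n - 1)) * C (n - 1)
                    + 3 * A n * (f ((n : ℤ) + 1) - f ((n : ℤ) - 1)) / ΔR) /
                  (4 + A n / A (n - 1)))
    {n : ℕ} (hn : 1 ≤ n) :
    C (n + 2) * weightDenom a (n + 2 : ℕ)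
      = 4 * (C (n + 1) * weightDenom a (n + 1 : ℕ)) - C n * weightDenom a n
        + 3 * (a / ΔR) * (-1) ^ (n : ℤ) * uSeq 1 * (f ((n : ℤ) + 2) - f n) := by
  have h := hCrec (n + 1) (by omega)
  rw [Nat.add_sub_cancel, hA (n + 1) (by omega), hA n hn,
    four_add_forwardCoeff_succ_div ha hD hn, forwardCoeff_succ_div ha hD hn] at h
  have h₁ := hD (n + 1) (by omega)
  have h₂ := hD (n + 2) (by omega)
  rw [h, forwardCoeff, Nat.add_sub_cancel, zpow_natCast]
  push_cast at h₁ h₂ ⊢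
  rw [show (n : ℤ) + 1 + 1 = n + 2 by ring, add_sub_cancel_right]
  field_simp
  ring

end coeff

/-- **Explicit weights of the inhomogeneous coefficient `c_{1,n}` of the forward
extension relation in the uniform-per-patch case.** The recursively defined
`C_n` has nonzero denominators and equals the weighted sum
`Σ_{k=-1}^{n} ω_{k,n} f_k` with the stated explicit weights. -/
theorem forward_inhomogeneous_coefficient_weights
    (ΔL ΔR : ℝ) (hL : 0 < ΔL) (hR : 0 < ΔR)
    (a b : ℝ)
    (ha : a = -(1/2) * ΔL / (ΔR + ΔL))
    (hb : b = -(1/2) * ΔR / (ΔR + ΔL))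
    (f : ℤ → ℝ)
    (A : ℕ → ℝ)
    (hA : ∀ n : ℕ, 1 ≤ n →
      A n = (-1 : ℝ) ^ (n - 1) * uSeq 1 * a / (uSeq (n : ℤ) + uSeq ((n : ℤ) - 1) * a))
    (C : ℕ → ℝ)
    (hC1 : C 1 = 3/2 * (1 / (ΔR + ΔL)) *
      ((ΔL / ΔR) * f 1 + (ΔR / ΔL - ΔL / ΔR) * f 0 - (ΔR / ΔL) * f (-1)))
    (hC2 : C 2 = (4 * C 1 + 3 * a * (f 2 - f 0) / ΔR) / (4 + a))
    (hCrec : ∀ n : ℕ, 2 ≤ n →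
      C (n + 1) = (4 * C n + (A n / A (n - 1)) * C (n - 1)
                    + 3 * A n * (f ((n : ℤ) + 1) - f ((n : ℤ) - 1)) / ΔR) /
                  (4 + A n / A (n - 1))) :
    (∀ n : ℕ, 1 ≤ n → uSeq (n : ℤ) + uSeq ((n : ℤ) - 1) * a ≠ 0) ∧
    (4 + a ≠ 0) ∧
    (∀ n : ℕ, 2 ≤ n → A (n - 1) ≠ 0 ∧ 4 + A n / A (n - 1) ≠ 0) ∧
    (∀ n : ℕ, 1 ≤ n →
      C n = 3 * (-1 : ℝ) ^ n * (a / ΔR) * uSeq 1 /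
              (uSeq (n : ℤ) + uSeq ((n : ℤ) - 1) * a) * f (n : ℤ)
          + (∑ k ∈ Finset.Icc (1 : ℤ) ((n : ℤ) - 1),
              3 * (-1 : ℝ) ^ k * (a / ΔR) * (uSeq ((n : ℤ) - k + 1) - uSeq ((n : ℤ) - k - 1)) /
                (uSeq (n : ℤ) + uSeq ((n : ℤ) - 1) * a) * f k)
          + 3 * ((a / ΔR) * (uSeq (n : ℤ) - uSeq ((n : ℤ) - 1)) - (b / ΔL) * uSeq (n : ℤ)) /
              (uSeq (n : ℤ) + uSeq ((n : ℤ) - 1) * a) * f 0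
          + 3 * (b / ΔL) * uSeq (n : ℤ) /
              (uSeq (n : ℤ) + uSeq ((n : ℤ) - 1) * a) * f (-1)) := by
  have hsum : 0 < ΔR + ΔL := by linarith
  have ha_neg : a < 0 := by rw [ha]; exact div_neg_of_neg_of_pos (by linarith) hsum
  have ha_gt : -(1/2) < a := by rw [ha, lt_div_iff₀ hsum]; linarith
  have hD : ∀ n : ℕ, 1 ≤ n → weightDenom a n ≠ 0 :=
    fun n hn => (weightDenom_pos (by linarith) hn).ne'
  have h4a : 4 + a ≠ 0 := by linarith
  have hA' : ∀ n : ℕ, 1 ≤ n → A n = forwardCoeff a n := hA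
  have hCD : ∀ n : ℕ, 1 ≤ n → C n * weightDenom a n = weightNumer (a / ΔR) (b / ΔL) f n := by
    refine eq_of_two_step_recurrence
      (fun n p q => 4 * q - p + 3 * (a / ΔR) * (-1) ^ (n : ℤ) * uSeq 1 * (f ((n : ℤ) + 2) - f n))
      (fun n hn => coeff_mul_weightDenom_add_two ha_neg.ne hD hA' hCrec hn)
      (fun n hn => by push_cast; exact weightNumer_add_two _ _ f (by exact_mod_cast hn))
      (coeff_one_mul_weightDenom hL hR ha hb hC1) ?_
    rw [coeff_two_mul_weightDenom h4a hC2, coeff_one_mul_weightDenom hL hR ha hb hC1]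
    exact (weightNumer_two _ _ f).symm
  refine ⟨hD, h4a, fun n hn => ?_, fun n hn => ?_⟩
  · obtain ⟨m, rfl⟩ := Nat.exists_eq_add_of_le' hn
    rw [show m + 2 - 1 = m + 1 by omega, hA' (m + 1 + 1) (by omega), hA' (m + 1) (by omega),
      four_add_forwardCoeff_succ_div ha_neg.ne hD (by omega)]
    exact ⟨forwardCoeff_ne_zero ha_neg.ne hD (by omega),
      div_ne_zero (hD _ (by omega)) (hD _ (by omega))⟩
  · rw [← weightNumer_natCast_div, ← hCD n hn]
    exact (mul_div_cancel_right₀ _ (hD n hn)).symm
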